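/- Assume r satisfies gcd(r, det P) = 1 and ξ ∈ ℂ is a primitive r-th root of unity. For λ, μ ∈ ρ + ℤ^ℓ set S(λ,μ) := ∑_{w ∈ W} det(w)·ξ^{B(μ, w·λ) − B(ρ,ρ)} (the exponent is an integer). Then for all λ, ν ∈ ρ + ℤ^ℓ one has ∑_{k ∈ {0,…,r−1}^ℓ} S(λ, ρ+k) · \overline{S(ν, ρ+k)} = r^ℓ · ∑ det(w)·det(w'), where the last sum runs over all pairs (w, w') ∈ W × W with w·λ − w'·ν ∈ rℤ^ℓ, and the bar denotes complex conjugation. -/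

import Mathlib

/-- Cast an integer vector to a rational vector. -/
def intVecQ {l : ℕ} (x : Fin l → ℤ) : Fin l → ℚ := fun i => (x i : ℚ)

/-- Cast a vector of residues `k ∈ {0,…,r−1}^l` to a rational vector. -/
def finVecQ {l r : ℕ} (k : Fin l → Fin r) : Fin l → ℚ := fun i => ((k i : ℕ) : ℚ)

/-- The determinant of an element of `GL_l(ℤ)`. -/
def glDet {l : ℕ} (w : Matrix.GeneralLinearGroup (Fin l) ℤ) : ℤ :=
  Matrix.det (w : Matrix (Fin l) (Fin l) ℤ)

/-- The action of an element of `GL_l(ℤ)` on `ℚ^l`. -/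
def glAct {l : ℕ} (w : Matrix.GeneralLinearGroup (Fin l) ℤ) (x : Fin l → ℚ) : Fin l → ℚ :=
  Matrix.mulVec ((w : Matrix (Fin l) (Fin l) ℤ).map fun z => (z : ℚ)) x

/-! Expanding the product turns the left side into
`∑_{(w,w')} det w · det w' · ∑_k ξ^{B(ρ+k, d)}` with `d = w·λ − w'·ν ∈ ℤ^ℓ`. Writing `G` for the
integral Gram matrix, the exponent is `B(ρ,d) + ⟨k, G d⟩`, so the character sum over
`k ∈ (ℤ/r)^ℓ` is `r^ℓ ξ^{B(ρ,d)}` if `G d ∈ rℤ^ℓ` and `0` otherwise. As `det G` is prime to `r`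
(multiply by the adjugate), `G d ∈ rℤ^ℓ` iff `d ∈ rℤ^ℓ`, and then `r ∣ B(ρ,d)` because `ρ` pairs
integrally with `ℤ^ℓ`; hence `ξ^{B(ρ,d)} = 1`. -/

open scoped Matrix

lemma zpow_sum₀ {ι G₀ : Type*} [CommGroupWithZero G₀] {a : G₀} (ha : a ≠ 0) (s : Finset ι)
    (f : ι → ℤ) : a ^ (∑ i ∈ s, f i) = ∏ i ∈ s, a ^ f i := by
  induction s using Finset.cons_induction with
  | empty => simp
  | cons i s _ ih => rw [Finset.sum_cons, Finset.prod_cons, zpow_add₀ ha, ih]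

namespace IsPrimitiveRoot

variable {K : Type*} [Field K] {ξ : K} {r : ℕ}

lemma sum_fin_zpow_mul (hξ : IsPrimitiveRoot ξ r) (c : ℤ) :
    ∑ j : Fin r, ξ ^ ((j : ℤ) * c) = if (r : ℤ) ∣ c then (r : K) else 0 := by
  have hpow : ∀ j : ℕ, ξ ^ ((j : ℤ) * c) = (ξ ^ c) ^ j := fun j => by
    rw [mul_comm, zpow_mul, zpow_natCast]
  simp only [hpow]
  split_ifs with hc
  · simp [(hξ.zpow_eq_one_iff_dvd c).2 hc]
  · have hne : ξ ^ c ≠ 1 := mt (hξ.zpow_eq_one_iff_dvd c).1 hc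
    rw [Fin.sum_univ_eq_sum_range (fun j => (ξ ^ c) ^ j), geom_sum_eq hne, ← zpow_natCast,
      ← zpow_mul, mul_comm, zpow_mul, zpow_natCast, hξ.pow_eq_one, one_zpow, sub_self, zero_div]

lemma sum_pi_fin_zpow_sum_mul {ι : Type*} [Fintype ι] [DecidableEq ι] (hξ : IsPrimitiveRoot ξ r)
    (hr : r ≠ 0) (c : ι → ℤ) :
    ∑ k : ι → Fin r, ξ ^ (∑ i, (k i : ℤ) * c i)
      = if ∀ i, (r : ℤ) ∣ c i then (r : K) ^ Fintype.card ι else 0 := by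
  simp only [zpow_sum₀ (hξ.ne_zero hr)]
  rw [← Fintype.prod_sum fun i (j : Fin r) => ξ ^ ((j : ℤ) * c i)]
  simp only [hξ.sum_fin_zpow_mul, Fintype.prod_ite_zero, Finset.prod_const, Finset.card_univ]

end IsPrimitiveRoot

lemma Matrix.forall_dvd_mulVec_iff {n R : Type*} [Fintype n] [DecidableEq n] [CommRing R]
    {r : R} (M : Matrix n n R) (hM : IsCoprime r M.det) (v : n → R) :
    (∀ i, r ∣ (M *ᵥ v) i) ↔ ∀ i, r ∣ v i := by
  have dvd_mulVec : ∀ (N : Matrix n n R) (u : n → R), (∀ i, r ∣ u i) → ∀ i, r ∣ (N *ᵥ u) i :=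
    fun N u hu i => Finset.dvd_sum fun j _ => (hu j).mul_left _
  refine ⟨fun h i => ?_, dvd_mulVec M v⟩
  have := dvd_mulVec M.adjugate _ h i
  rw [Matrix.mulVec_mulVec, Matrix.adjugate_mul, Matrix.smul_mulVec, Matrix.one_mulVec,
    Pi.smul_apply, smul_eq_mul] at this
  exact hM.dvd_of_dvd_mul_left this

lemma Complex.sum_mul_conj_sum_zpow {ι κ : Type*} [Fintype ι] [Fintype κ] {ξ : ℂ} (hξ : ‖ξ‖ = 1)
    (a b : ι → ℤ) (E F : ι → κ → ℤ) :
    ∑ k, (∑ w, (a w : ℂ) * ξ ^ E w k) * starRingEnd ℂ (∑ w, (b w : ℂ) * ξ ^ F w k)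
      = ∑ p : ι × ι, ((a p.1 * b p.2 : ℤ) : ℂ) * ∑ k, ξ ^ (E p.1 k - F p.2 k) := by
  have hξ0 : ξ ≠ 0 := norm_ne_zero_iff.1 (hξ ▸ one_ne_zero)
  have hconj : ∀ n : ℤ, starRingEnd ℂ (ξ ^ n) = ξ ^ (-n) := fun n => by
    rw [map_zpow₀, ← Complex.inv_eq_conj hξ, inv_zpow, zpow_neg]
  calc _ = ∑ k, ∑ p : ι × ι, ((a p.1 * b p.2 : ℤ) : ℂ) * ξ ^ (E p.1 k - F p.2 k) := by
        refine Fintype.sum_congr _ _ fun k => ?_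
        rw [map_sum, Finset.sum_mul_sum, ← Finset.sum_product']
        refine Fintype.sum_congr _ _ fun p => ?_
        rw [map_mul, map_intCast, hconj, sub_eq_add_neg, zpow_add₀ hξ0]
        push_cast
        ring
    _ = _ := by
        rw [Finset.sum_comm]
        simp only [Finset.mul_sum]

section IntegralVectors

variable {l : ℕ}

lemma intVecQ_add (a b : Fin l → ℤ) : intVecQ (a + b) = intVecQ a + intVecQ b := by
  funext i
  simp [intVecQ]

lemma intVecQ_sub (a b : Fin l → ℤ) : intVecQ (a - b) = intVecQ a - intVecQ b := by
  funext i
  simp [intVecQ]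

lemma intVecQ_smul (r : ℤ) (a : Fin l → ℤ) : intVecQ (r • a) = (r : ℚ) • intVecQ a := by
  funext i
  simp [intVecQ]

lemma intVecQ_single (i : Fin l) : intVecQ (Pi.single i 1) = Pi.single i 1 := by
  funext j
  simp [intVecQ, Pi.single_apply, apply_ite (Int.cast : ℤ → ℚ)]

lemma finVecQ_dotProduct_intVecQ {r : ℕ} (k : Fin l → Fin r) (c : Fin l → ℤ) :
    finVecQ k ⬝ᵥ intVecQ c = ((∑ i, (k i : ℤ) * c i : ℤ) : ℚ) := by
  simp [finVecQ, intVecQ, dotProduct]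

lemma glAct_intVecQ (w : Matrix.GeneralLinearGroup (Fin l) ℤ) (a : Fin l → ℤ) :
    glAct w (intVecQ a) = intVecQ ((w : Matrix (Fin l) (Fin l) ℤ) *ᵥ a) := by
  funext i
  simp [glAct, intVecQ, Matrix.mulVec, dotProduct]

lemma exists_intVecQ_eq_mul_iff (r : ℤ) (d : Fin l → ℤ) :
    (∃ z : Fin l → ℤ, intVecQ d = fun i => ((r * z i : ℤ) : ℚ)) ↔ ∀ i, r ∣ d i := by
  simp only [intVecQ, funext_iff, Int.cast_inj, dvd_def, Classical.skolem]

lemma exists_glAct_eq_add_intVecQ {ρ x : Fin l → ℚ} {w : Matrix.GeneralLinearGroup (Fin l) ℤ}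
    (hw : ∃ z, glAct w ρ - ρ = intVecQ z) (hx : ∃ a, x = ρ + intVecQ a) :
    ∃ a, glAct w x = ρ + intVecQ a := by
  obtain ⟨z, hz⟩ := hw
  obtain ⟨a, rfl⟩ := hx
  refine ⟨z + (w : Matrix (Fin l) (Fin l) ℤ) *ᵥ a, ?_⟩
  rw [glAct, Matrix.mulVec_add, ← glAct, ← glAct, glAct_intVecQ, intVecQ_add, ← hz]
  abel

lemma exists_glAct_sub_glAct_eq_intVecQ {ρ x y : Fin l → ℚ}
    {w w' : Matrix.GeneralLinearGroup (Fin l) ℤ}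
    (hw : ∃ z, glAct w ρ - ρ = intVecQ z) (hw' : ∃ z, glAct w' ρ - ρ = intVecQ z)
    (hx : ∃ a, x = ρ + intVecQ a) (hy : ∃ a, y = ρ + intVecQ a) :
    ∃ d, glAct w x - glAct w' y = intVecQ d := by
  obtain ⟨a, ha⟩ := exists_glAct_eq_add_intVecQ hw hx
  obtain ⟨b, hb⟩ := exists_glAct_eq_add_intVecQ hw' hy
  exact ⟨a - b, by rw [ha, hb, intVecQ_sub, add_sub_add_left_eq_sub]⟩

end IntegralVectors

section GramMatrix

variable {l : ℕ} (B : (Fin l → ℚ) →ₗ[ℚ] (Fin l → ℚ) →ₗ[ℚ] ℚ)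

lemma exists_map_intCast_eq_toMatrix₂'
    (hB : ∀ x y : Fin l → ℤ, ∃ n : ℤ, (n : ℚ) = B (intVecQ x) (intVecQ y)) :
    ∃ G : Matrix (Fin l) (Fin l) ℤ, G.map (Int.cast) = LinearMap.toMatrix₂' ℚ B := by
  choose G hG using fun i j => hB (Pi.single i 1) (Pi.single j 1)
  refine ⟨Matrix.of G, Matrix.ext fun i j => ?_⟩
  simp [hG, intVecQ_single]

lemma apply_intVecQ_eq_dotProduct {G : Matrix (Fin l) (Fin l) ℤ}
    (hG : G.map (Int.cast) = LinearMap.toMatrix₂' ℚ B) (x : Fin l → ℚ) (d : Fin l → ℤ) :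
    B x (intVecQ d) = x ⬝ᵥ intVecQ (G *ᵥ d) := by
  have hmap : intVecQ (G *ᵥ d) = G.map (Int.cast) *ᵥ intVecQ d :=
    funext fun i => RingHom.map_mulVec (Int.castRingHom ℚ) G d i
  rw [hmap, hG, ← Matrix.toLinearMap₂'_apply', Matrix.toLinearMap₂'_toMatrix']

end GramMatrix

open Classical in
lemma sum_zpow_sub_eq_ite {K : Type*} [Field K] {l r : ℕ} (hr : r ≠ 0) {ξ : K}
    (hξ : IsPrimitiveRoot ξ r) (B : (Fin l → ℚ) →ₗ[ℚ] (Fin l → ℚ) →ₗ[ℚ] ℚ) {ρ : Fin l → ℚ}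
    (hρ : ∀ y : Fin l → ℤ, ∃ n : ℤ, (n : ℚ) = B ρ (intVecQ y))
    {G : Matrix (Fin l) (Fin l) ℤ} (hG : G.map (Int.cast) = LinearMap.toMatrix₂' ℚ B)
    (hGr : IsCoprime (r : ℤ) G.det) {x y : Fin l → ℚ} {d : Fin l → ℤ} (hd : x - y = intVecQ d)
    {E F : (Fin l → Fin r) → ℤ} (hE : ∀ k, (E k : ℚ) = B (ρ + finVecQ k) x - B ρ ρ)
    (hF : ∀ k, (F k : ℚ) = B (ρ + finVecQ k) y - B ρ ρ) :
    ∑ k, ξ ^ (E k - F k)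
      = if ∃ z : Fin l → ℤ, x - y = fun i => ((r * z i : ℤ) : ℚ) then (r : K) ^ l else 0 := by
  obtain ⟨m, hm⟩ := hρ d
  have hexp : ∀ k, E k - F k = m + ∑ i, (k i : ℤ) * (G *ᵥ d) i := fun k => by
    have h : ((E k - F k : ℤ) : ℚ) = B (ρ + finVecQ k) (x - y) := by
      rw [Int.cast_sub, hE, hF, map_sub]
      ring
    rw [hd, map_add, LinearMap.add_apply, apply_intVecQ_eq_dotProduct B hG (finVecQ k),
      finVecQ_dotProduct_intVecQ, ← hm] at h
    exact_mod_cast h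
  simp only [hexp, zpow_add₀ (hξ.ne_zero hr), ← Finset.mul_sum, hξ.sum_pi_fin_zpow_sum_mul hr,
    Fintype.card_fin, G.forall_dvd_mulVec_iff hGr, hd, exists_intVecQ_eq_mul_iff, mul_ite,
    mul_zero]
  split_ifs with hdvd
  · have hmr : (r : ℤ) ∣ m := by
      obtain ⟨z, hz⟩ := Classical.skolem.1 hdvd
      obtain ⟨n, hn⟩ := hρ z
      have hdz : d = (r : ℤ) • z := funext fun i => hz i
      rw [hdz, intVecQ_smul, map_smul, ← hn, smul_eq_mul] at hm
      exact ⟨n, by exact_mod_cast hm⟩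
    rw [(hξ.zpow_eq_one_iff_dvd m).2 hmr, one_mul]
  · rfl

open scoped Classical in
theorem stmt10_general (l r : ℕ) (hr : 0 < r)
    (B : (Fin l → ℚ) →ₗ[ℚ] (Fin l → ℚ) →ₗ[ℚ] ℚ)
    (hBint : ∀ x y : Fin l → ℤ, ∃ n : ℤ, (n : ℚ) = B (intVecQ x) (intVecQ y))
    (ρ : Fin l → ℚ)
    (hρ : ∀ y : Fin l → ℤ, ∃ n : ℤ, (n : ℚ) = B ρ (intVecQ y))
    (dP : ℤ)
    (hdP : (dP : ℚ) = (Matrix.of fun i j : Fin l => B (Pi.single i 1) (Pi.single j 1)).det)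
    (hcop : IsCoprime (r : ℤ) dP)
    (ξ : ℂ) (hξ : IsPrimitiveRoot ξ r)
    (W : Subgroup (Matrix.GeneralLinearGroup (Fin l) ℤ)) [Fintype W]
    (hWρ : ∀ w : W, ∃ z : Fin l → ℤ, glAct (w : Matrix.GeneralLinearGroup (Fin l) ℤ) ρ - ρ = intVecQ z)
    (lam nu : Fin l → ℚ)
    (hlam : ∃ a : Fin l → ℤ, lam = ρ + intVecQ a)
    (hnu : ∃ a : Fin l → ℤ, nu = ρ + intVecQ a)
    (El Ev : W → (Fin l → Fin r) → ℤ)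
    (hEl : ∀ (w : W) (k : Fin l → Fin r),
      ((El w k : ℤ) : ℚ) = B (ρ + finVecQ k) (glAct (w : Matrix.GeneralLinearGroup (Fin l) ℤ) lam) - B ρ ρ)
    (hEv : ∀ (w : W) (k : Fin l → Fin r),
      ((Ev w k : ℤ) : ℚ) = B (ρ + finVecQ k) (glAct (w : Matrix.GeneralLinearGroup (Fin l) ℤ) nu) - B ρ ρ) :
    ∑ k : Fin l → Fin r,
        (∑ w : W, ((glDet (w : Matrix.GeneralLinearGroup (Fin l) ℤ) : ℤ) : ℂ) * ξ ^ (El w k)) *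
          (starRingEnd ℂ) (∑ w : W, ((glDet (w : Matrix.GeneralLinearGroup (Fin l) ℤ) : ℤ) : ℂ) * ξ ^ (Ev w k))
      = (r : ℂ) ^ l *
          ∑ p : W × W,
            if ∃ z : Fin l → ℤ,
                glAct (p.1 : Matrix.GeneralLinearGroup (Fin l) ℤ) lam - glAct (p.2 : Matrix.GeneralLinearGroup (Fin l) ℤ) nu = fun i => ((r * z i : ℤ) : ℚ)
            then ((glDet (p.1 : Matrix.GeneralLinearGroup (Fin l) ℤ) * glDet (p.2 : Matrix.GeneralLinearGroup (Fin l) ℤ) : ℤ) : ℂ) else 0 := by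
  obtain ⟨G, hG⟩ := exists_map_intCast_eq_toMatrix₂' B hBint
  have hGr : IsCoprime (r : ℤ) G.det := by
    have hdet : ((G.det : ℤ) : ℚ) = dP := by
      rw [hdP, Int.cast_det, hG]
      rfl
    rwa [show G.det = dP by exact_mod_cast hdet]
  rw [Complex.sum_mul_conj_sum_zpow (hξ.norm'_eq_one hr.ne'), Finset.mul_sum]
  refine Fintype.sum_congr _ _ fun p => ?_
  obtain ⟨d, hd⟩ := exists_glAct_sub_glAct_eq_intVecQ (hWρ p.1) (hWρ p.2) hlam hnu
  rw [sum_zpow_sub_eq_ite hr.ne' hξ B hρ hG hGr hd (hEl p.1) (hEv p.2)]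
  split_ifs <;> ring

open scoped Classical in
/-- orthogonality relation for the `S`-matrix
`S(λ,μ) = ∑_{w ∈ W} det(w)·ξ^{B(μ,w·λ) − B(ρ,ρ)}`:
`∑_k S(λ,ρ+k)·conj(S(ν,ρ+k)) = r^ℓ · ∑_{(w,w') : w·λ − w'·ν ∈ rℤ^ℓ} det(w)·det(w')`. -/
theorem stmt10 (l r : ℕ) (hl : 0 < l) (hr : 0 < r)
    (B : (Fin l → ℚ) →ₗ[ℚ] (Fin l → ℚ) →ₗ[ℚ] ℚ)
    (hBsymm : ∀ x y, B x y = B y x)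
    (hBint : ∀ x y : Fin l → ℤ, ∃ n : ℤ, (n : ℚ) = B (intVecQ x) (intVecQ y))
    (hBeven : ∀ y : Fin l → ℤ, ∃ n : ℤ, ((2 * n : ℤ) : ℚ) = B (intVecQ y) (intVecQ y))
    (ρ : Fin l → ℚ)
    (hρ : ∀ y : Fin l → ℤ, ∃ n : ℤ, (n : ℚ) = B ρ (intVecQ y))
    (dP : ℤ)
    (hdP : (dP : ℚ) = (Matrix.of fun i j : Fin l => B (Pi.single i 1) (Pi.single j 1)).det)
    (hdPne : dP ≠ 0) (hcop : IsCoprime (r : ℤ) dP)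
    (ξ : ℂ) (hξ : IsPrimitiveRoot ξ r)
    (W : Subgroup (Matrix.GeneralLinearGroup (Fin l) ℤ)) [Fintype W]
    (hWB : ∀ (w : W) (x y : Fin l → ℚ), B (glAct (w : Matrix.GeneralLinearGroup (Fin l) ℤ) x) (glAct (w : Matrix.GeneralLinearGroup (Fin l) ℤ) y) = B x y)
    (hWρ : ∀ w : W, ∃ z : Fin l → ℤ, glAct (w : Matrix.GeneralLinearGroup (Fin l) ℤ) ρ - ρ = intVecQ z)
    (lam nu : Fin l → ℚ)
    (hlam : ∃ a : Fin l → ℤ, lam = ρ + intVecQ a)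
    (hnu : ∃ a : Fin l → ℤ, nu = ρ + intVecQ a)
    (El Ev : W → (Fin l → Fin r) → ℤ)
    (hEl : ∀ (w : W) (k : Fin l → Fin r),
      ((El w k : ℤ) : ℚ) = B (ρ + finVecQ k) (glAct (w : Matrix.GeneralLinearGroup (Fin l) ℤ) lam) - B ρ ρ)
    (hEv : ∀ (w : W) (k : Fin l → Fin r),
      ((Ev w k : ℤ) : ℚ) = B (ρ + finVecQ k) (glAct (w : Matrix.GeneralLinearGroup (Fin l) ℤ) nu) - B ρ ρ) :
    ∑ k : Fin l → Fin r,
        (∑ w : W, ((glDet (w : Matrix.GeneralLinearGroup (Fin l) ℤ) : ℤ) : ℂ) * ξ ^ (El w k)) *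
          (starRingEnd ℂ) (∑ w : W, ((glDet (w : Matrix.GeneralLinearGroup (Fin l) ℤ) : ℤ) : ℂ) * ξ ^ (Ev w k))
      = (r : ℂ) ^ l *
          ∑ p : W × W,
            if ∃ z : Fin l → ℤ,
                glAct (p.1 : Matrix.GeneralLinearGroup (Fin l) ℤ) lam - glAct (p.2 : Matrix.GeneralLinearGroup (Fin l) ℤ) nu = fun i => ((r * z i : ℤ) : ℚ)
            then ((glDet (p.1 : Matrix.GeneralLinearGroup (Fin l) ℤ) * glDet (p.2 : Matrix.GeneralLinearGroup (Fin l) ℤ) : ℤ) : ℂ) else 0 :=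
  stmt10_general l r hr B hBint ρ hρ dP hdP hcop ξ hξ W hWρ lam nu hlam hnu El Ev hEl hEv
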